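/- Let z be an element of I^fpf_infty. The symplectic involution Schubert polynomial S^Sp_z lies in Z[x_1,...,x_n] (i.e., involves no variable x_m with m > n) if and only if z has no fpf-descent greater than n, where a positive integer i is an fpf-descent of z if i+1 != z(i) > z(i+1) != i. -/

import Mathlib

open MvPolynomial

/-! ### Permutations of ℤ, reduced words -/

/-- The simple transposition `s_i = (i, i+1)` of `ℤ`. -/
def sT (i : ℤ) : Equiv.Perm ℤ := Equiv.swap i (i + 1)

/-- The product `s_{i_1} s_{i_2} ⋯ s_{i_l}` of the simple transpositions indexed by a word. -/
def wordProd (l : List ℤ) : Equiv.Perm ℤ := (l.map sT).prod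

/-- `S_ℤ`: the subgroup of permutations of `ℤ` generated by the simple transpositions. -/
def SZSet : Set (Equiv.Perm ℤ) := {w | ∃ l : List ℤ, wordProd l = w}

/-- `S_∞`: the subgroup generated by `s_i` for `i ≥ 1`. -/
def SinftySet : Set (Equiv.Perm ℤ) :=
  {w | ∃ l : List ℤ, (∀ i ∈ l, 1 ≤ i) ∧ wordProd l = w}

/-- `S_n`: the subgroup generated by `s_i` for `1 ≤ i ≤ n-1`. -/
def SnSet (n : ℕ) : Set (Equiv.Perm ℤ) :=
  {w | ∃ l : List ℤ, (∀ i ∈ l, 1 ≤ i ∧ i < n) ∧ wordProd l = w}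

/-- A reduced word for `w`: a minimal length word whose product is `w`. -/
def IsReducedWord (w : Equiv.Perm ℤ) (l : List ℤ) : Prop :=
  wordProd l = w ∧ ∀ m : List ℤ, wordProd m = w → l.length ≤ m.length

/-- The Coxeter length of `w` (the length of any reduced word for `w`). -/
noncomputable def lenOf (w : Equiv.Perm ℤ) : ℕ :=
  sInf {m | ∃ l : List ℤ, wordProd l = w ∧ l.length = m}

/-- The inversion set `Inv(w) = {(a,b) : a < b, w(a) > w(b)}`. -/
def InvSet (w : Equiv.Perm ℤ) : Set (ℤ × ℤ) := {p | p.1 < p.2 ∧ w p.2 < w p.1}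

/-- The Lehmer code `c_i(w) = #{j : i < j, w(i) > w(j)}`. -/
noncomputable def codeOf (w : Equiv.Perm ℤ) (i : ℤ) : ℕ := {j : ℤ | i < j ∧ w j < w i}.ncard

/-- The Rothe diagram `D(w) = {(i, w(j)) : i < j, w(i) > w(j)}`. -/
def RotheD (w : Equiv.Perm ℤ) : Set (ℤ × ℤ) :=
  {p | ∃ j : ℤ, p.1 < j ∧ w j < w p.1 ∧ p.2 = w j}

/-! ### Primed letters and primed words -/

/-- A primed letter: `(x, false)` denotes the integer `x`, `(x, true)` denotes `x' = x - 1/2`. -/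
abbrev PLetter := ℤ × Bool

/-- Twice the value of a primed letter (so that comparisons agree with `1' < 1 < 2' < 2 < ⋯`). -/
def pval (p : PLetter) : ℤ := 2 * p.1 - (if p.2 then 1 else 0)

/-- A strictly decreasing primed word. -/
def PDec (l : List PLetter) : Prop := l.Pairwise (fun p q => pval q < pval p)

/-- A strictly decreasing integer word. -/
def ZDec (l : List ℤ) : Prop := l.Pairwise (fun x y => y < x)

/-- Remove the primes from a primed word (the "ceiling"). -/
def unprimeW (l : List PLetter) : List ℤ := l.map Prod.fst

/-- Membership in `R⁺(w)`: a primed word whose unprimed form is a reduced word for `w`. -/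
def IsPrimedReducedWord (w : Equiv.Perm ℤ) (l : List PLetter) : Prop :=
  IsReducedWord w (unprimeW l)

/-- The set `Marked(i)` of marked inversions of a primed word. -/
def markedSet (l : List PLetter) : Set (ℤ × ℤ) :=
  {p | ∃ j : Fin l.length, (l.get j).2 = true ∧
        p.1 = wordProd ((l.drop ((j : ℕ) + 1)).reverse.map Prod.fst) (l.get j).1 ∧
        p.2 = wordProd ((l.drop ((j : ℕ) + 1)).reverse.map Prod.fst) ((l.get j).1 + 1)}

/-! ### Factorizations (as sequences of factors) -/

/-- The concatenation of the first `N` factors of a factorization. -/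
def concatP (a : ℕ → List PLetter) (N : ℕ) : List PLetter := ((List.range N).map a).flatten

/-- The concatenation of the first `N` factors of an unprimed factorization. -/
def concatZ (a : ℕ → List ℤ) (N : ℕ) : List ℤ := ((List.range N).map a).flatten

/-- `RF⁺(w, A)`: decreasing primed reduced factorizations of `w` with marked set `A`
(all but finitely many factors empty). -/
def RFplus (w : Equiv.Perm ℤ) (A : Set (ℤ × ℤ)) : Set (ℕ → List PLetter) :=
  {a | (∀ i, PDec (a i)) ∧ ∃ N : ℕ, (∀ m, N ≤ m → a m = []) ∧
        IsPrimedReducedWord w (concatP a N) ∧ markedSet (concatP a N) = A}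

/-- `RF⁺_n(w, A)`: elements of `RF⁺(w, A)` with all factors beyond the first `n` empty. -/
def RFplusN (n : ℕ) (w : Equiv.Perm ℤ) (A : Set (ℤ × ℤ)) : Set (ℕ → List PLetter) :=
  {a | (∀ i, PDec (a i)) ∧ (∀ m, n ≤ m → a m = []) ∧
        IsPrimedReducedWord w (concatP a n) ∧ markedSet (concatP a n) = A}

/-- `RF_n(w)`: unprimed decreasing reduced factorizations of `w` into at most `n` factors. -/
def RFZn (n : ℕ) (w : Equiv.Perm ℤ) : Set (ℕ → List ℤ) :=
  {a | (∀ i, ZDec (a i)) ∧ (∀ m, n ≤ m → a m = []) ∧ IsReducedWord w (concatZ a n)}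

/-- Removing the primes from each factor of a primed factorization. -/
def unprimeF (a : ℕ → List PLetter) : ℕ → List ℤ := fun m => unprimeW (a m)

/-! ### The pairing procedure and crystal operators (primed version) -/

/-- Find the first letter `b` in the (decreasing) list with `⌈b⌉ < c`, removing it. -/
def findPairP (c : ℤ) : List PLetter → Option PLetter × List PLetter
  | [] => (none, [])
  | b :: rest =>
      if b.1 < c then (some b, rest)
      else
        let r := findPairP c rest
        (r.1, b :: r.2)

/-- Iterate the pairing over the letters of `v` from right to left. -/
def pairFoldP (u : List PLetter) (vrev : List PLetter) :
    List (PLetter × PLetter) × List PLetter :=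
  vrev.foldl (fun st c =>
    match findPairP c.1 st.2 with
    | (none, r) => (st.1, r)
    | (some b, r) => ((b, c) :: st.1, r)) ([], u)

/-- The set `pair(u, v)` of paired letters, as a list of pairs. -/
def pairsP (u v : List PLetter) : List (PLetter × PLetter) := (pairFoldP u v.reverse).1

/-- The unpaired letters of `v` (in decreasing order). -/
def unpairedSnd (u v : List PLetter) : List PLetter :=
  v.filter fun c => decide (c ∉ (pairsP u v).map Prod.snd)

/-- The unpaired letters of `u` (in decreasing order). -/
def unpairedFst (u v : List PLetter) : List PLetter :=
  u.filter fun b => decide (b ∉ (pairsP u v).map Prod.fst)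

theorem exists_add_not_mem (L : List ℤ) (x : ℤ) : ∃ q : ℕ, x + q ∉ L := by
  have h : ∃ q : ℕ, ∀ y ∈ L, y < x + q := by
    induction L with
    | nil => exact ⟨1, by simp⟩
    | cons a t ih =>
      obtain ⟨q, hq⟩ := ih
      refine ⟨q + (a - x).toNat + 1, ?_⟩
      intro y hy
      rcases List.mem_cons.mp hy with rfl | h
      · push_cast; omega
      · have := hq y h; push_cast; omega
  obtain ⟨q, hq⟩ := h
  exact ⟨q, fun hmem => lt_irrefl _ (hq _ hmem)⟩

theorem exists_sub_not_mem (L : List ℤ) (x : ℤ) : ∃ q : ℕ, x - q ∉ L := by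
  have h : ∃ q : ℕ, ∀ y ∈ L, x - q < y := by
    induction L with
    | nil => exact ⟨1, by simp⟩
    | cons a t ih =>
      obtain ⟨q, hq⟩ := ih
      refine ⟨q + (x - a).toNat + 1, ?_⟩
      intro y hy
      rcases List.mem_cons.mp hy with rfl | h
      · push_cast; omega
      · have := hq y h; push_cast; omega
  obtain ⟨q, hq⟩ := h
  exact ⟨q, fun hmem => lt_irrefl _ (hq _ hmem)⟩

/-- The minimal `q ∈ ℕ` with `x + q ∉ L`. -/
def qUp (L : List ℤ) (x : ℤ) : ℕ := Nat.find (exists_add_not_mem L x)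

/-- The minimal `q ∈ ℕ` with `x - q ∉ L`. -/
def qDown (L : List ℤ) (x : ℤ) : ℕ := Nat.find (exists_sub_not_mem L x)

/-- Reverse the prime on a primed letter. -/
def toggleP (p : PLetter) : PLetter := (p.1, !p.2)

/-- Toggle the prime on the occurrence of the letter `p` in a primed word. -/
def toggleIn (l : List PLetter) (p : PLetter) : List PLetter :=
  l.map fun q => if q = p then toggleP q else q

/-- Swap the primes on a pair `(b, c)` with `b` in the first word and `c` in the second:
reverse both primes when exactly one of the two letters is primed. -/
def swapPairIn (uv : List PLetter × List PLetter) (bc : PLetter × PLetter) :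
    List PLetter × List PLetter :=
  if bc.1.2 = bc.2.2 then uv else (toggleIn uv.1 bc.1, toggleIn uv.2 bc.2)

/-- Insert a letter into a decreasing primed word at the correct position. -/
def insertDecP (p : PLetter) : List PLetter → List PLetter
  | [] => [p]
  | q :: t => if pval q < pval p then p :: q :: t else q :: insertDecP p t

/-- The raising crystal operator acting on a consecutive pair of factors (primed version). -/
def eStepP (u v : List PLetter) : Option (List PLetter × List PLetter) :=
  match unpairedSnd u v with
  | [] => none
  | x :: _ =>
    let q : ℕ := qUp (unprimeW u) x.1
    let toSwap := (pairsP u v).filter fun bc => decide (x.1 < bc.2.1 ∧ bc.2.1 ≤ x.1 + q)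
    some (toSwap.foldl swapPairIn (insertDecP (x.1 + q, x.2) u, v.erase x))

/-- The lowering crystal operator acting on a consecutive pair of factors (primed version). -/
def fStepP (u v : List PLetter) : Option (List PLetter × List PLetter) :=
  match (unpairedFst u v).getLast? with
  | none => none
  | some y =>
    let q : ℕ := qDown (unprimeW v) y.1
    let toSwap := (pairsP u v).filter fun bc => decide (y.1 - q ≤ bc.1.1 ∧ bc.1.1 < y.1)
    some (toSwap.foldl swapPairIn (u.erase y, insertDecP (y.1 - q, y.2) v))

/-- Apply a two-factor operator at position `(i, i+1)` of a factorization. -/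
def applyAtP (g : List PLetter → List PLetter → Option (List PLetter × List PLetter))
    (i : ℕ) (a : ℕ → List PLetter) : Option (ℕ → List PLetter) :=
  (g (a i) (a (i + 1))).map fun uv =>
    Function.update (Function.update a i uv.1) (i + 1) uv.2

/-- The crystal operator `e` on primed factorizations acting on factors `i, i+1` (0-indexed). -/
def eP (i : ℕ) (a : ℕ → List PLetter) : Option (ℕ → List PLetter) := applyAtP eStepP i a

/-- The crystal operator `f` on primed factorizations acting on factors `i, i+1` (0-indexed). -/
def fP (i : ℕ) (a : ℕ → List PLetter) : Option (ℕ → List PLetter) := applyAtP fStepP i a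

/-! ### Crystal operators (unprimed version) -/

def findPairZ (c : ℤ) : List ℤ → Option ℤ × List ℤ
  | [] => (none, [])
  | b :: rest =>
      if b < c then (some b, rest)
      else
        let r := findPairZ c rest
        (r.1, b :: r.2)

def pairFoldZ (u : List ℤ) (vrev : List ℤ) : List (ℤ × ℤ) × List ℤ :=
  vrev.foldl (fun st c =>
    match findPairZ c st.2 with
    | (none, r) => (st.1, r)
    | (some b, r) => ((b, c) :: st.1, r)) ([], u)

/-- The set `pair(u, v)` for integer words. -/
def pairsZ (u v : List ℤ) : List (ℤ × ℤ) := (pairFoldZ u v.reverse).1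

def insertDecZ (x : ℤ) : List ℤ → List ℤ
  | [] => [x]
  | q :: t => if q < x then x :: q :: t else q :: insertDecZ x t

/-- The raising crystal operator on a consecutive pair of integer factors. -/
def eStepZ (u v : List ℤ) : Option (List ℤ × List ℤ) :=
  match v.filter (fun c => decide (c ∉ (pairsZ u v).map Prod.snd)) with
  | [] => none
  | x :: _ =>
    let q : ℕ := qUp u x
    some (insertDecZ (x + q) u, v.erase x)

/-- The lowering crystal operator on a consecutive pair of integer factors. -/
def fStepZ (u v : List ℤ) : Option (List ℤ × List ℤ) :=
  match (u.filter (fun b => decide (b ∉ (pairsZ u v).map Prod.fst))).getLast? with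
  | none => none
  | some y =>
    let q : ℕ := qDown v y
    some (u.erase y, insertDecZ (y - q) v)

def applyAtZ (g : List ℤ → List ℤ → Option (List ℤ × List ℤ))
    (i : ℕ) (a : ℕ → List ℤ) : Option (ℕ → List ℤ) :=
  (g (a i) (a (i + 1))).map fun uv =>
    Function.update (Function.update a i uv.1) (i + 1) uv.2

/-- The crystal operator `e` acting on factors `i, i+1` (0-indexed) of an integer factorization,
so that `eZ i` is the paper's `e_{i+1}`. -/
def eZ (i : ℕ) (a : ℕ → List ℤ) : Option (ℕ → List ℤ) := applyAtZ eStepZ i a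

/-- The crystal operator `f` acting on factors `i, i+1` (0-indexed). -/
def fZ (i : ℕ) (a : ℕ → List ℤ) : Option (ℕ → List ℤ) := applyAtZ fStepZ i a

/-! ### Coxeter–Knuth equivalence and tableaux -/

/-- One elementary Coxeter–Knuth move. -/
inductive CKStep : List ℤ → List ℤ → Prop
  | acb (u v : List ℤ) {a b c : ℤ} (h1 : a < b) (h2 : b < c) :
      CKStep (u ++ a :: c :: b :: v) (u ++ c :: a :: b :: v)
  | bca (u v : List ℤ) {a b c : ℤ} (h1 : a < b) (h2 : b < c) :
      CKStep (u ++ b :: c :: a :: v) (u ++ b :: a :: c :: v)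
  | braid (u v : List ℤ) {a b : ℤ} (h : b = a + 1 ∨ b = a - 1) :
      CKStep (u ++ a :: b :: a :: v) (u ++ b :: a :: b :: v)

/-- Coxeter–Knuth equivalence. -/
def CKEquiv : List ℤ → List ℤ → Prop := Relation.EqvGen CKStep

/-- A tableau is recorded as its list of rows; its shape is the list of row lengths. -/
def shapeOf (T : List (List ℤ)) : List ℕ := T.map List.length

/-- The row reading word: rows left to right, starting with the last row. -/
def rowword (T : List (List ℤ)) : List ℤ := T.reverse.flatten

/-- The reverse row reading word. -/
def revrow (T : List (List ℤ)) : List ℤ := (rowword T).reverse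

/-- The entry of `T` in row `i`, position `j` within the row (both 0-indexed). -/
def entryOf (T : List (List ℤ)) (i j : ℕ) : ℤ := (T.getD i []).getD j 0

/-- `T` has partition shape: rows nonempty with weakly decreasing lengths. -/
def IsPartShape (T : List (List ℤ)) : Prop :=
  (∀ r ∈ T, r ≠ []) ∧ ∀ i, i + 1 < T.length → (T.getD (i + 1) []).length ≤ (T.getD i []).length

/-- An increasing tableau of partition shape. -/
def IncrTab (T : List (List ℤ)) : Prop :=
  IsPartShape T ∧ (∀ r ∈ T, r.Pairwise (· < ·)) ∧
  ∀ i j, i + 1 < T.length → j < (T.getD (i + 1) []).length → entryOf T i j < entryOf T (i + 1) j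

/-- A decreasing tableau of partition shape. -/
def DecrTab (T : List (List ℤ)) : Prop :=
  IsPartShape T ∧ (∀ r ∈ T, r.Pairwise (fun x y => y < x)) ∧
  ∀ i j, i + 1 < T.length → j < (T.getD (i + 1) []).length → entryOf T (i + 1) j < entryOf T i j

/-! ### Shifted tableaux -/

/-- Strict partition shape: rows nonempty with strictly decreasing lengths.  Row `i`
(0-indexed) of a shifted tableau occupies columns `i, i+1, …`. -/
def IsStrictShape (T : List (List ℤ)) : Prop :=
  (∀ r ∈ T, r ≠ []) ∧ ∀ i, i + 1 < T.length → (T.getD (i + 1) []).length < (T.getD i []).length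

/-- An increasing shifted tableau: rows and columns strictly increase.  In row-list
coordinates, the entry of row `i+1` in within-row position `j` lies in the same column as the
entry of row `i` in within-row position `j+1`. -/
def ShIncrTab (T : List (List ℤ)) : Prop :=
  IsStrictShape T ∧ (∀ r ∈ T, r.Pairwise (· < ·)) ∧
  ∀ i j, i + 1 < T.length → j < (T.getD (i + 1) []).length →
    entryOf T i (j + 1) < entryOf T (i + 1) j

/-- A decreasing shifted tableau. -/
def ShDecrTab (T : List (List ℤ)) : Prop :=
  IsStrictShape T ∧ (∀ r ∈ T, r.Pairwise (fun x y => y < x)) ∧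
  ∀ i j, i + 1 < T.length → j < (T.getD (i + 1) []).length →
    entryOf T (i + 1) j < entryOf T i (j + 1)

/-! ### Young diagrams of partitions given as lists -/

/-- The Young diagram of a partition given as a list of row lengths (1-indexed positions). -/
def YDiagL (lam : List ℕ) : Set (ℤ × ℤ) :=
  {p | 1 ≤ p.1 ∧ 1 ≤ p.2 ∧ p.2 ≤ (lam.getD (p.1 - 1).toNat 0 : ℤ)}

/-- The tableau `T_λ` with entry `i + j - 1` in each box `(i, j)` of `D_λ` (1-indexed). -/
def Tlam (lam : List ℕ) : List (List ℤ) :=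
  lam.mapIdx fun i k => (List.range k).map fun j => ((i + j + 1 : ℕ) : ℤ)

/-! ### Fixed-point-free involutions -/

def fpfFun (i : ℤ) : ℤ := if Even i then i - 1 else i + 1

theorem fpfFun_involutive : Function.Involutive fpfFun := by
  intro i
  simp only [fpfFun, Int.even_iff]
  split <;> split <;> omega

/-- The fixed-point-free involution `1_fpf : i ↦ i - (-1)^i`. -/
def onefpf : Equiv.Perm ℤ :=
  ⟨fpfFun, fpfFun, fpfFun_involutive, fpfFun_involutive⟩

/-- `I^fpf_ℤ`: the `S_ℤ`-conjugation orbit of `1_fpf`. -/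
def IfpfZ : Set (Equiv.Perm ℤ) := {z | ∃ w ∈ SZSet, z = w⁻¹ * onefpf * w}

/-- `I^fpf_∞`: the `S_∞`-conjugation orbit of `1_fpf`. -/
def IfpfInfty : Set (Equiv.Perm ℤ) := {z | ∃ w ∈ SinftySet, z = w⁻¹ * onefpf * w}

/-- `𝒜^Sp(z)`: minimal-length `w ∈ S_ℤ` with `z = w⁻¹ 1_fpf w`. -/
def ASp (z : Equiv.Perm ℤ) : Set (Equiv.Perm ℤ) :=
  {w | w ∈ SZSet ∧ z = w⁻¹ * onefpf * w ∧
       ∀ v ∈ SZSet, z = v⁻¹ * onefpf * v → lenOf w ≤ lenOf v}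

/-- `R^Sp(z)`: the set of fpf-involution words for `z`. -/
def RSp (z : Equiv.Perm ℤ) : Set (List ℤ) := {l | ∃ w ∈ ASp z, IsReducedWord w l}

/-- The fpf-involution code `c^Sp_i(z)`. -/
noncomputable def cSp (z : Equiv.Perm ℤ) (i : ℤ) : ℕ :=
  {j : ℤ | i < j ∧ z j < min i (z i)}.ncard

/-- `RF^Sp_n(z)`: symplectic reduced factorizations into at most `n` decreasing factors. -/
def RFSp (n : ℕ) (z : Equiv.Perm ℤ) : Set (ℕ → List ℤ) :=
  {a | (∀ i, ZDec (a i)) ∧ (∀ m, n ≤ m → a m = []) ∧ concatZ a n ∈ RSp z}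

/-- `BRF^Sp_n(z)`: the bounded (by the standard flag) symplectic reduced factorizations:
every letter `m` of the factor in (0-indexed) position `i` satisfies `m ≥ i + 1`. -/
def BRFSp (n : ℕ) (z : Equiv.Perm ℤ) : Set (ℕ → List ℤ) :=
  {a | a ∈ RFSp n z ∧ ∀ m, ∀ x ∈ a m, (m : ℤ) + 1 ≤ x}

/-! ### Symplectic Coxeter–Knuth equivalence -/

/-- The extra symplectic relations, affecting the first two letters. -/
inductive SpExtra : List ℤ → List ℤ → Prop
  | down (a : ℤ) (t : List ℤ) : SpExtra (a :: (a - 1) :: t) (a :: (a + 1) :: t)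
  | comm (a b : ℤ) (t : List ℤ) (h : a % 2 = b % 2) : SpExtra (a :: b :: t) (b :: a :: t)

/-- Symplectic Coxeter–Knuth equivalence. -/
def SpCKEquiv : List ℤ → List ℤ → Prop :=
  Relation.EqvGen (fun x y => CKStep x y ∨ SpExtra x y)

/-- `half_<(λ)` for a partition given as a list: positive values among `λ_i - i`. -/
def halfLtL (lam : List ℕ) : List ℕ :=
  ((List.range lam.length).map fun k => ((lam.getD k 0 : ℤ) - (k + 1)).toNat).filter
    fun m => decide (0 < m)

/-- The shifted tableau `T^Sp_λ` of shape `half_<(λ)` with entry `i + j` in box `(i,j) ∈ SD_μ`. -/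
def TSpTab (lam : List ℕ) : List (List ℤ) :=
  (halfLtL lam).mapIdx fun k m => (List.range m).map fun t => ((2 * (k + 1) + t : ℕ) : ℤ)

/-- Symmetric partition (list version): the diagram is invariant under transposition. -/
def SymmPartL (lam : List ℕ) : Prop :=
  ∀ p : ℤ × ℤ, p ∈ YDiagL lam ↔ (p.2, p.1) ∈ YDiagL lam

/-- Skew-symmetric partition (list version). -/
def SkewSymmPartL (lam : List ℕ) : Prop :=
  SymmPartL lam ∧ ∀ i : ℤ, (i, i) ∈ YDiagL lam → (i + 1, i + 1) ∉ YDiagL lam →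
    (¬ ∃ mu : List ℕ, mu.Pairwise (· ≥ ·) ∧ YDiagL mu = YDiagL lam ∪ {(i, i + 1)} ∧
        YDiagL mu ≠ YDiagL lam) ∧
    (¬ ∃ mu : List ℕ, mu.Pairwise (· ≥ ·) ∧ YDiagL mu = YDiagL lam \ {(i, i + 1)} ∧
        YDiagL mu ≠ YDiagL lam)

/-! ### Demazure product, orthogonal involution words -/

/-- One step of the Demazure product: multiply by `s_i` on the left if this increases length. -/
noncomputable def demStep (i : ℤ) (x : Equiv.Perm ℤ) : Equiv.Perm ℤ :=
  if lenOf x < lenOf (sT i * x) then sT i * x else x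

/-- The Demazure product of the letters of a word. -/
noncomputable def demWordProd (l : List ℤ) : Equiv.Perm ℤ := l.foldr demStep 1

/-- `𝒜^O(z)`: minimal-length `w` with `z = w⁻¹ ∘ w` (Demazure product). -/
def AO (z : Equiv.Perm ℤ) : Set (Equiv.Perm ℤ) :=
  {w | (∃ l : List ℤ, IsReducedWord w l ∧ demWordProd (l.reverse ++ l) = z) ∧
       ∀ v : Equiv.Perm ℤ, (∃ l : List ℤ, IsReducedWord v l ∧ demWordProd (l.reverse ++ l) = z) →
         lenOf w ≤ lenOf v}

/-- `Cyc(z) = {(a, b) : a < b = z(a)}`. -/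
def CycSet (z : Equiv.Perm ℤ) : Set (ℤ × ℤ) := {p | p.1 < p.2 ∧ z p.1 = p.2}

/-- `R^O(z)`: the set of primed involution words for `z`. -/
def RO (z : Equiv.Perm ℤ) : Set (List PLetter) :=
  {l | ∃ A ⊆ CycSet z, ∃ w ∈ AO z, IsPrimedReducedWord w l ∧ markedSet l = A}

/-- The involution code `c^O_i(z)`. -/
noncomputable def cO (z : Equiv.Perm ℤ) (i : ℤ) : ℕ :=
  {j : ℤ | i < j ∧ z j ≤ min i (z i)}.ncard

/-- `RF^O_n(z)`: orthogonal (primed) reduced factorizations into at most `n` factors. -/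
def RFO (n : ℕ) (z : Equiv.Perm ℤ) : Set (ℕ → List PLetter) :=
  {a | (∀ i, PDec (a i)) ∧ (∀ m, n ≤ m → a m = []) ∧ concatP a n ∈ RO z}

/-- The unprimed image `uRF^O_n(z)` of `RF^O_n(z)`. -/
def uRFO (n : ℕ) (z : Equiv.Perm ℤ) : Set (ℕ → List ℤ) := unprimeF '' RFO n z

/-! ### Primed and orthogonal Coxeter–Knuth equivalence -/

/-- One elementary primed Coxeter–Knuth move. -/
inductive PCKStep : List PLetter → List PLetter → Prop
  | swapACB (u v : List PLetter) {A B C : PLetter} (h1 : A.1 < B.1) (h2 : B.1 < C.1) :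
      PCKStep (u ++ A :: C :: B :: v) (u ++ C :: A :: B :: v)
  | swapBCA (u v : List PLetter) {A B C : PLetter} (h1 : A.1 < B.1) (h2 : B.1 < C.1) :
      PCKStep (u ++ B :: C :: A :: v) (u ++ B :: A :: C :: v)
  | braid00 (u v : List PLetter) {a b : ℤ} (h : b = a + 1 ∨ b = a - 1) :
      PCKStep (u ++ (a, false) :: (b, false) :: (a, false) :: v)
              (u ++ (b, false) :: (a, false) :: (b, false) :: v)
  | braid11 (u v : List PLetter) {a b : ℤ} (h : b = a + 1 ∨ b = a - 1) :
      PCKStep (u ++ (a, true) :: (b, true) :: (a, true) :: v)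
              (u ++ (b, true) :: (a, true) :: (b, true) :: v)
  | mixA (u v : List PLetter) {a b : ℤ} (h : b = a + 1 ∨ b = a - 1) :
      PCKStep (u ++ (a, true) :: (b, false) :: (a, false) :: v)
              (u ++ (b, false) :: (a, false) :: (b, true) :: v)
  | mixB (u v : List PLetter) {a b : ℤ} (h : b = a + 1 ∨ b = a - 1) :
      PCKStep (u ++ (a, false) :: (b, true) :: (a, false) :: v)
              (u ++ (b, false) :: (a, true) :: (b, false) :: v)
  | mixC (u v : List PLetter) {a b : ℤ} (h : b = a + 1 ∨ b = a - 1) :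
      PCKStep (u ++ (a, true) :: (b, true) :: (a, false) :: v)
              (u ++ (b, false) :: (a, true) :: (b, true) :: v)
  | mixD (u v : List PLetter) {a b : ℤ} (h : b = a + 1 ∨ b = a - 1) :
      PCKStep (u ++ (a, true) :: (b, false) :: (a, true) :: v)
              (u ++ (b, true) :: (a, false) :: (b, true) :: v)

/-- The extra orthogonal relations, affecting the first letters of words. -/
inductive OExtra : List PLetter → List PLetter → Prop
  | prime (a : ℤ) (w : List PLetter) : OExtra ((a, false) :: w) ((a, true) :: w)
  | comm00 (a b : ℤ) (w : List PLetter) :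
      OExtra ((a, false) :: (b, false) :: w) ((b, false) :: (a, false) :: w)
  | comm01 (a b : ℤ) (w : List PLetter) :
      OExtra ((a, false) :: (b, true) :: w) ((b, false) :: (a, true) :: w)
  | comm10 (a b : ℤ) (w : List PLetter) :
      OExtra ((a, true) :: (b, false) :: w) ((b, true) :: (a, false) :: w)
  | comm11 (a b : ℤ) (w : List PLetter) :
      OExtra ((a, true) :: (b, true) :: w) ((b, true) :: (a, true) :: w)

/-- Orthogonal Coxeter–Knuth equivalence. -/
def OCKEquiv : List PLetter → List PLetter → Prop :=
  Relation.EqvGen (fun x y => PCKStep x y ∨ OExtra x y)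

/-- Increasing shifted tableau with primed entries: removing the primes yields an increasing
shifted tableau. -/
def ShIncrTabP (T : List (List PLetter)) : Prop := ShIncrTab (T.map unprimeW)

/-- Decreasing shifted tableau with primed entries. -/
def ShDecrTabP (T : List (List PLetter)) : Prop := ShDecrTab (T.map unprimeW)

/-- No primed entries on the main diagonal (the first entry of each row). -/
def DiagUnprimed (T : List (List PLetter)) : Prop :=
  ∀ r ∈ T, ∀ p : PLetter, r.head? = some p → p.2 = false

/-- The row reading word of a primed shifted tableau. -/
def rowwordP (T : List (List PLetter)) : List PLetter := T.reverse.flatten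

/-- The shape of a primed tableau. -/
def shapeOfP (T : List (List PLetter)) : List ℕ := T.map List.length

/-! ### Iterated partial operators -/

def iterOpt {α : Type*} (g : α → Option α) : ℕ → α → Option α
  | 0, a => some a
  | m + 1, a => (g a).bind (iterOpt g m)

/-! ### Weak compositions as functions `ℤ → ℕ` supported on positive integers -/

/-- A weak composition: nonnegative entries indexed by positive integers, finitely supported. -/
def WeakCompF (α : ℤ → ℕ) : Prop :=
  (∀ i ≤ 0, α i = 0) ∧ ∃ N : ℤ, ∀ i, N ≤ i → α i = 0

/-- A partition: a weakly decreasing weak composition. -/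
def IsPartitionFun (lam : ℤ → ℕ) : Prop :=
  WeakCompF lam ∧ ∀ i : ℤ, 1 ≤ i → lam (i + 1) ≤ lam i

/-- `lam` is the decreasing rearrangement `λ(α)` of `α`:
it is a partition with the same part multiplicities. -/
def IsDecRearr (α lam : ℤ → ℕ) : Prop :=
  IsPartitionFun lam ∧ ∀ k : ℕ, 0 < k →
    {i : ℤ | 1 ≤ i ∧ k ≤ α i}.ncard = {i : ℤ | 1 ≤ i ∧ k ≤ lam i}.ncard

/-- The Young diagram of a partition function (1-indexed positions). -/
def YDiag (lam : ℤ → ℕ) : Set (ℤ × ℤ) :=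
  {p | 1 ≤ p.1 ∧ 1 ≤ p.2 ∧ p.2 ≤ (lam p.1 : ℤ)}

/-- Symmetric partition: diagram invariant under transposition. -/
def SymmPartF (lam : ℤ → ℕ) : Prop :=
  IsPartitionFun lam ∧ ∀ p : ℤ × ℤ, p ∈ YDiag lam ↔ (p.2, p.1) ∈ YDiag lam

/-- Skew-symmetric partition. -/
def SkewSymmPartF (lam : ℤ → ℕ) : Prop :=
  SymmPartF lam ∧ ∀ i : ℤ, (i, i) ∈ YDiag lam → (i + 1, i + 1) ∉ YDiag lam →
    (¬ ∃ mu : ℤ → ℕ, IsPartitionFun mu ∧ YDiag mu = YDiag lam ∪ {(i, i + 1)} ∧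
        YDiag mu ≠ YDiag lam) ∧
    (¬ ∃ mu : ℤ → ℕ, IsPartitionFun mu ∧ YDiag mu = YDiag lam \ {(i, i + 1)} ∧
        YDiag mu ≠ YDiag lam)

/-- The Demazure action of a simple transposition on weak compositions:
sort the entries in positions `i, i+1` into weakly increasing order. -/
def sComp (i : ℤ) (β : ℤ → ℕ) : ℤ → ℕ :=
  if β (i + 1) < β i then
    (fun j => if j = i then β (i + 1) else if j = i + 1 then β i else β j)
  else β

/-- The Demazure action of a word on a weak composition (rightmost letter acts first). -/
def demCompAct (l : List ℤ) (β : ℤ → ℕ) : ℤ → ℕ := l.foldr sComp β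

/-- `u = u(α)`: the minimal-length permutation with `α = u ∘ λ(α)` under the Demazure action. -/
def IsUofAlpha (α lam : ℤ → ℕ) (u : Equiv.Perm ℤ) : Prop :=
  u ∈ SinftySet ∧ (∃ l : List ℤ, IsReducedWord u l ∧ demCompAct l lam = α) ∧
  ∀ v ∈ SinftySet, (∃ l : List ℤ, IsReducedWord v l ∧ demCompAct l lam = α) → lenOf u ≤ lenOf v

/-! ### Isobaric divided differences, Schubert polynomials -/

/-- `g = π_i f`, i.e. `(x_i - x_{i+1}) g = x_i f - x_{i+1} (s_i f)`. -/
def IsPiApply (i : ℤ) (f g : MvPolynomial ℤ ℤ) : Prop :=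
  (X i - X (i + 1)) * g = X i * f - X (i + 1) * MvPolynomial.rename (sT i) f

/-- `g = π_{i_1} π_{i_2} ⋯ π_{i_k} f` for the word `l = [i_1, …, i_k]`. -/
inductive IsPiWord : List ℤ → MvPolynomial ℤ ℤ → MvPolynomial ℤ ℤ → Prop
  | nil (f : MvPolynomial ℤ ℤ) : IsPiWord [] f f
  | cons (i : ℤ) (t : List ℤ) (f h g : MvPolynomial ℤ ℤ) :
      IsPiWord t f h → IsPiApply i h g → IsPiWord (i :: t) f g

/-- The dominant monomial `x^λ = ∏_{k=1}^{M} x_k^{λ_k}`. -/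
noncomputable def xpow (lam : ℤ → ℕ) (M : ℕ) : MvPolynomial ℤ ℤ :=
  ∏ k ∈ Finset.range M, (X ((k : ℤ) + 1) : MvPolynomial ℤ ℤ) ^ lam ((k : ℤ) + 1)

/-- The defining axioms of the family of Schubert polynomials `{𝔖_w}_{w ∈ S_∞}`:
`𝔖_w = x^λ` for `w` dominant of shape `λ`, and
`∂_i 𝔖_w = 𝔖_{w s_i}` whenever `w(i) > w(i+1)` (cleared of denominators). -/
def IsSchubertFamily (Sf : Equiv.Perm ℤ → MvPolynomial ℤ ℤ) : Prop :=
  (∀ w ∈ SinftySet, ∀ lam : ℤ → ℕ, IsPartitionFun lam → RotheD w = YDiag lam →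
     ∀ M : ℕ, (∀ i : ℤ, (M : ℤ) < i → lam i = 0) → Sf w = xpow lam M) ∧
  (∀ w ∈ SinftySet, ∀ i : ℤ, 1 ≤ i → w (i + 1) < w i →
     (X i - X (i + 1)) * Sf (w * sT i) = Sf w - MvPolynomial.rename (sT i) (Sf w))

/-- Substituting `x_m = 0` for all `m > n` in a polynomial. -/
noncomputable def restrictVars (n : ℕ) (g : MvPolynomial ℤ ℤ) : MvPolynomial ℤ ℤ :=
  (MvPolynomial.aeval fun m : ℤ => if m ≤ (n : ℤ) then (X m : MvPolynomial ℤ ℤ) else 0) g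

/-! ### Queer crystal operators `ē_1`, `f̄_1`, `σ_i` on symplectic factorizations -/

/-- Insert a letter directly after the first letter of a list. -/
def insertAfterFirst (c : ℤ) : List ℤ → List ℤ
  | [] => [c]
  | x :: t => x :: c :: t

/-- The operator `ē_1` on symplectic reduced factorizations. -/
def e1barOp (a : ℕ → List ℤ) : Option (ℕ → List ℤ) :=
  match a 1 with
  | [] => none
  | y :: s =>
    if ∀ x ∈ a 0, x < y then
      if Even y then
        some (Function.update (Function.update a 1 s) 0 (y :: a 0))
      else
        some (Function.update (Function.update a 1 s) 0 (insertAfterFirst (y - 2) (a 0)))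
    else none

/-- The operator `f̄_1` on symplectic reduced factorizations. -/
def f1barOp (a : ℕ → List ℤ) : Option (ℕ → List ℤ) :=
  match a 0 with
  | [] => none
  | x :: _ =>
    if ∀ y ∈ a 1, y < x then
      if (x - 1) ∈ a 0 then
        some (Function.update (Function.update a 0 ((a 0).erase (x - 1))) 1 ((x + 1) :: a 1))
      else
        some (Function.update (Function.update a 0 ((a 0).erase x)) 1 (x :: a 1))
    else none

/-- The string-reversing operator `σ` acting on factors `i, i+1` (0-indexed):
apply `f^k` where `k = wt_i - wt_{i+1}` if `k ≥ 0`, and `e^{-k}` otherwise. -/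
def sigZ (i : ℕ) (a : ℕ → List ℤ) : Option (ℕ → List ℤ) :=
  if (a (i + 1)).length ≤ (a i).length then
    iterOpt (fZ i) ((a i).length - (a (i + 1)).length) a
  else
    iterOpt (eZ i) ((a (i + 1)).length - (a i).length) a

/-- The operators `ē_{j+1}` (0-indexed `j`), defined by
`ē_i = σ_{i-1} σ_i ē_{i-1} σ_i σ_{i-1}`. -/
def ebarOp : ℕ → (ℕ → List ℤ) → Option (ℕ → List ℤ)
  | 0 => e1barOp
  | j + 1 => fun a =>
      (sigZ j a).bind fun b => (sigZ (j + 1) b).bind fun c =>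
        (ebarOp j c).bind fun d => (sigZ (j + 1) d).bind (sigZ j)

/-- The operators `f̄_{j+1}` (0-indexed `j`). -/
def fbarOp : ℕ → (ℕ → List ℤ) → Option (ℕ → List ℤ)
  | 0 => f1barOp
  | j + 1 => fun a =>
      (sigZ j a).bind fun b => (sigZ (j + 1) b).bind fun c =>
        (fbarOp j c).bind fun d => (sigZ (j + 1) d).bind (sigZ j)

/-! ### Crystal Demazure operators on symplectic factorizations -/

/-- The crystal Demazure operator `𝔇_i` (paper-indexed `i ∈ [n-1]`) inside the ambient
crystal `RF^Sp_n(z)`:  all `b` with `e_i^m(b) ∈ X` for some `m ∈ ℕ`. -/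
def DOpSp (n : ℕ) (z : Equiv.Perm ℤ) (i : ℤ) (Xs : Set (ℕ → List ℤ)) : Set (ℕ → List ℤ) :=
  {b | b ∈ RFSp n z ∧ ∃ m : ℕ, ∃ b', iterOpt (eZ (i - 1).toNat) m b = some b' ∧ b' ∈ Xs}

/-- `𝔇_{i_1} 𝔇_{i_2} ⋯ 𝔇_{i_k} X` for the word `l = [i_1, …, i_k]`. -/
def DemFoldSp (n : ℕ) (z : Equiv.Perm ℤ) (l : List ℤ) (Xs : Set (ℕ → List ℤ)) :
    Set (ℕ → List ℤ) :=
  l.foldr (fun i Y => DOpSp n z i Y) Xs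

/-!
Let `E(z)` (`fpfInvSet z`) be the set of pairs `a < b` with `z b < z a` and `z a ≠ b`. Conjugating `z` by `s_i`
lowers `|E(z)|` by two at an fpf-descent `i`, fixes `z` when `z i = i + 1`, and raises `|E(z)|` by
two otherwise; as `E(1_fpf) = ∅`, every `w ∈ 𝒜^Sp(z)` has length `|E(z)|/2`. Consequently every
such `w` lies in `S_∞` and has an ascent at each `i` that is not an fpf-descent of `z`, while at
each fpf-descent `i` some `w ∈ 𝒜^Sp(z)` has a descent.

If no `i > n` is an fpf-descent, each `𝔖_w`, `w ∈ 𝒜^Sp(z)`, is symmetric in `x_i, x_{i+1}` for all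
`i > n`, and a polynomial with these symmetries cannot contain its largest variable if that
variable exceeds `x_n`. Conversely, at an fpf-descent `i > n`,
`∂_i 𝔖^Sp_z = ∑ 𝔖_{w s_i}` over the `w ∈ 𝒜^Sp(z)` with a descent at `i`. This is a nonempty sum of
Schubert polynomials indexed by permutations of one common length, hence nonzero (apply `∂_j` at a
descent `j` and induct on the length), so `𝔖^Sp_z` is not symmetric in `x_i, x_{i+1}`.
-/

/-! ### Simple transpositions and words -/

lemma sT_apply (i x : ℤ) : sT i x = if x = i then i + 1 else if x = i + 1 then i else x :=
  Equiv.swap_apply_def i (i + 1) x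

@[simp] lemma sT_apply_left (i : ℤ) : sT i i = i + 1 := Equiv.swap_apply_left _ _

@[simp] lemma sT_apply_right (i : ℤ) : sT i (i + 1) = i := Equiv.swap_apply_right _ _

lemma sT_apply_of_ne_of_ne {i x : ℤ} (h₁ : x ≠ i) (h₂ : x ≠ i + 1) : sT i x = x :=
  Equiv.swap_apply_of_ne_of_ne h₁ h₂

@[simp] lemma sT_apply_sT_apply (i x : ℤ) : sT i (sT i x) = x := Equiv.swap_apply_self _ _ _

@[simp] lemma sT_inv (i : ℤ) : (sT i)⁻¹ = sT i := Equiv.swap_inv _ _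

@[simp] lemma sT_symm (i : ℤ) : (sT i).symm = sT i := Equiv.symm_swap _ _

@[simp] lemma mul_sT_mul_sT (w : Equiv.Perm ℤ) (i : ℤ) : w * sT i * sT i = w := by
  rw [mul_assoc, sT, Equiv.swap_mul_self, mul_one]

lemma sT_lt_sT {i a b : ℤ} (hab : a < b) (h : (a, b) ≠ (i, i + 1)) : sT i a < sT i b := by
  rw [sT_apply, sT_apply]
  split_ifs <;> simp_all <;> omega

def sTPair (i : ℤ) : Equiv.Perm (ℤ × ℤ) := Equiv.prodCongr (sT i) (sT i)

@[simp] lemma sTPair_apply (i : ℤ) (p : ℤ × ℤ) : sTPair i p = (sT i p.1, sT i p.2) := rfl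

@[simp] lemma sTPair_symm (i : ℤ) : (sTPair i).symm = sTPair i := by
  simp [sTPair, Equiv.prodCongr_symm]

lemma wordProd_cons (i : ℤ) (l : List ℤ) : wordProd (i :: l) = sT i * wordProd l := by
  simp [wordProd]

lemma wordProd_concat (l : List ℤ) (i : ℤ) : wordProd (l ++ [i]) = wordProd l * sT i := by
  simp [wordProd]

lemma mul_sT_mem_SZSet {w : Equiv.Perm ℤ} (hw : w ∈ SZSet) (i : ℤ) : w * sT i ∈ SZSet := by
  obtain ⟨l, rfl⟩ := hw
  exact ⟨l ++ [i], wordProd_concat l i⟩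

lemma mul_sT_mem_SinftySet {w : Equiv.Perm ℤ} (hw : w ∈ SinftySet) {i : ℤ} (hi : 1 ≤ i) :
    w * sT i ∈ SinftySet := by
  obtain ⟨l, hl, rfl⟩ := hw
  refine ⟨l ++ [i], fun j hj => ?_, wordProd_concat l i⟩
  rcases List.mem_append.mp hj with hj | hj
  · exact hl j hj
  · rwa [List.mem_singleton.mp hj]

lemma SinftySet_subset_SZSet : SinftySet ⊆ SZSet := fun _ ⟨l, _, hl⟩ => ⟨l, hl⟩

lemma wordProd_apply_of_forall_ne {l : List ℤ} {x : ℤ} (h : ∀ i ∈ l, x ≠ i ∧ x ≠ i + 1) :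
    wordProd l x = x := by
  induction l with
  | nil => rfl
  | cons i t ih =>
    obtain ⟨h₁, h₂⟩ := h i List.mem_cons_self
    rw [wordProd_cons, Equiv.Perm.mul_apply, ih fun j hj => h j (List.mem_cons_of_mem _ hj),
      sT_apply_of_ne_of_ne h₁ h₂]

lemma exists_forall_ge_apply_eq_self {w : Equiv.Perm ℤ} (hw : w ∈ SZSet) :
    ∃ B : ℤ, ∀ x, B ≤ x → w x = x := by
  obtain ⟨l, rfl⟩ := hw
  obtain ⟨B, hB⟩ := l.finite_toSet.bddAbove
  exact ⟨B + 2, fun x hx => wordProd_apply_of_forall_ne fun i hi => by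
    have := hB hi; omega⟩

lemma SinftySet.apply_of_nonpos {w : Equiv.Perm ℤ} (hw : w ∈ SinftySet) {x : ℤ} (hx : x ≤ 0) :
    w x = x := by
  obtain ⟨l, hl, rfl⟩ := hw
  exact wordProd_apply_of_forall_ne fun i hi => by have := hl i hi; omega

/-! ### Coxeter length and inversions -/

lemma eq_one_of_strictMono {w : Equiv.Perm ℤ} (hw : w ∈ SZSet) (hmono : StrictMono w) :
    w = 1 := by
  obtain ⟨B, hB⟩ := exists_forall_ge_apply_eq_self hw
  suffices h : ∀ x ≤ B, ∀ y, x ≤ y → w y = y from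
    Equiv.ext fun x => h (min x B) (min_le_right _ _) x (min_le_left _ _)
  refine Int.leInductionDown (fun y hy => hB y hy) fun x _ ih y hy => ?_
  rcases hy.lt_or_eq with hy | rfl
  · exact ih y (by omega)
  have hlt : w (x - 1) < x := by simpa [ih x le_rfl] using hmono (sub_one_lt x)
  obtain ⟨u, hu⟩ := w.surjective (x - 1)
  by_contra hne
  rcases lt_trichotomy u (x - 1) with h | rfl | h
  · have := hmono h; omega
  · exact hne hu
  · have := ih u (by omega); omega

lemma exists_descent {w : Equiv.Perm ℤ} (hw : w ∈ SZSet) (hne : w ≠ 1) :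
    ∃ i, w (i + 1) < w i := by
  by_contra! h
  exact hne (eq_one_of_strictMono hw (strictMono_int_of_lt_succ fun i =>
    (h i).lt_of_ne (w.injective.ne (by omega))))

lemma SinftySet.exists_pos_descent {w : Equiv.Perm ℤ} (hw : w ∈ SinftySet) (hne : w ≠ 1) :
    ∃ i, 1 ≤ i ∧ w (i + 1) < w i := by
  obtain ⟨i, hi⟩ := exists_descent (SinftySet_subset_SZSet hw) hne
  refine ⟨i, ?_, hi⟩
  by_contra h
  have h₁ := SinftySet.apply_of_nonpos hw (x := i) (by omega)
  have h₂ := w.injective (SinftySet.apply_of_nonpos hw (x := w (i + 1)) (by omega))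
  omega

lemma InvSet_mul_sT_of_descent {w : Equiv.Perm ℤ} {i : ℤ} (h : w (i + 1) < w i) :
    InvSet (w * sT i) = sTPair i '' (InvSet w \ {(i, i + 1)}) := by
  ext ⟨a, b⟩
  simp only [InvSet, Set.mem_image_equiv, sTPair_symm, sTPair_apply, Set.mem_sdiff,
    Set.mem_singleton_iff, Set.mem_ofPred_eq, Prod.mk.injEq, Equiv.Perm.mul_apply]
  rw [sT_apply i a, sT_apply i b]
  split_ifs <;> subst_vars <;> omega

lemma InvSet_one : InvSet 1 = ∅ :=
  Set.eq_empty_of_forall_notMem fun _ h => h.1.not_gt h.2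

lemma InvSet_finite {w : Equiv.Perm ℤ} (hw : w ∈ SZSet) : (InvSet w).Finite := by
  obtain ⟨l, rfl⟩ := hw
  induction l using List.reverseRecOn with
  | nil => simp [wordProd, InvSet_one]
  | append_singleton l i ih =>
    rw [wordProd_concat]
    set w := wordProd l
    rcases lt_or_gt_of_ne (w.injective.ne (show i + 1 ≠ i by omega)) with h | h
    · rw [InvSet_mul_sT_of_descent h]
      exact ih.sdiff.image _
    · have h' := InvSet_mul_sT_of_descent (w := w * sT i) (i := i) (by simpa using h)
      rw [mul_sT_mul_sT] at h'
      refine ((ih.image (sTPair i)).insert (i, i + 1)).subset fun p hp => ?_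
      by_cases hpi : p = (i, i + 1)
      · exact Or.inl hpi
      · exact Or.inr (by simpa [h', Set.mem_image_equiv] using ⟨hp, hpi⟩)

lemma ncard_InvSet_mul_sT_of_descent {w : Equiv.Perm ℤ} (hw : w ∈ SZSet) {i : ℤ}
    (h : w (i + 1) < w i) : (InvSet (w * sT i)).ncard + 1 = (InvSet w).ncard := by
  rw [InvSet_mul_sT_of_descent h, Set.ncard_image_of_injective _ (sTPair i).injective]
  exact Set.ncard_sdiff_singleton_add_one ⟨by omega, h⟩ (InvSet_finite hw)

lemma lenOf_le_length {w : Equiv.Perm ℤ} {l : List ℤ} (h : wordProd l = w) :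
    lenOf w ≤ l.length :=
  Nat.sInf_le ⟨l, h, rfl⟩

lemma exists_wordProd_eq_of_length_eq_lenOf {w : Equiv.Perm ℤ} (hw : w ∈ SZSet) :
    ∃ l, wordProd l = w ∧ l.length = lenOf w := by
  obtain ⟨l, hl⟩ := hw
  exact Nat.sInf_mem (s := {m | ∃ l, wordProd l = w ∧ l.length = m}) ⟨_, l, hl, rfl⟩

lemma lenOf_one : lenOf 1 = 0 :=
  Nat.le_zero.mp (lenOf_le_length (l := []) rfl)

lemma lenOf_mul_sT_le {w : Equiv.Perm ℤ} (hw : w ∈ SZSet) (i : ℤ) :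
    lenOf (w * sT i) ≤ lenOf w + 1 := by
  obtain ⟨l, hl, hlen⟩ := exists_wordProd_eq_of_length_eq_lenOf hw
  simpa [hlen] using lenOf_le_length (l := l ++ [i]) (by rw [wordProd_concat, hl])

lemma ncard_InvSet_wordProd_le (l : List ℤ) : (InvSet (wordProd l)).ncard ≤ l.length := by
  induction l using List.reverseRecOn with
  | nil => simp [wordProd, InvSet_one]
  | append_singleton l i ih =>
    rw [wordProd_concat, List.length_append, List.length_singleton]
    set w := wordProd l
    have hw : w ∈ SZSet := ⟨l, rfl⟩
    rcases lt_or_gt_of_ne (w.injective.ne (show i + 1 ≠ i by omega)) with h | h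
    · have := ncard_InvSet_mul_sT_of_descent hw h
      omega
    · have := ncard_InvSet_mul_sT_of_descent (mul_sT_mem_SZSet hw i) (i := i) (by simpa using h)
      rw [mul_sT_mul_sT] at this
      omega

lemma lenOf_eq_ncard_InvSet {w : Equiv.Perm ℤ} (hw : w ∈ SZSet) :
    lenOf w = (InvSet w).ncard := by
  refine le_antisymm ?_ ?_
  · induction h : (InvSet w).ncard using Nat.strong_induction_on generalizing w with
    | _ k ih =>
      by_cases hne : w = 1
      · simp [hne, lenOf_one]
      obtain ⟨i, hi⟩ := exists_descent hw hne
      have := ncard_InvSet_mul_sT_of_descent hw hi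
      have := ih _ (by omega) (mul_sT_mem_SZSet hw i) rfl
      have := lenOf_mul_sT_le (mul_sT_mem_SZSet hw i) i
      rw [mul_sT_mul_sT] at this
      omega
  · obtain ⟨l, rfl, hlen⟩ := exists_wordProd_eq_of_length_eq_lenOf hw
    exact hlen ▸ ncard_InvSet_wordProd_le l

lemma lenOf_mul_sT_of_descent {w : Equiv.Perm ℤ} (hw : w ∈ SZSet) {i : ℤ}
    (h : w (i + 1) < w i) : lenOf (w * sT i) + 1 = lenOf w := by
  rw [lenOf_eq_ncard_InvSet hw, lenOf_eq_ncard_InvSet (mul_sT_mem_SZSet hw i)]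
  exact ncard_InvSet_mul_sT_of_descent hw h

lemma eq_one_of_lenOf_eq_zero {w : Equiv.Perm ℤ} (hw : w ∈ SZSet) (h : lenOf w = 0) : w = 1 := by
  by_contra hne
  obtain ⟨i, hi⟩ := exists_descent hw hne
  have := lenOf_mul_sT_of_descent hw hi
  omega

/-! ### Fixed-point-free involutions and fpf-inversions -/

lemma onefpf_apply (x : ℤ) : onefpf x = if x % 2 = 0 then x - 1 else x + 1 := by
  show fpfFun x = _
  simp only [fpfFun, Int.even_iff]

lemma onefpf_involutive : Function.Involutive onefpf := fpfFun_involutive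

def fpfInvSet (z : Equiv.Perm ℤ) : Set (ℤ × ℤ) :=
  {p | p.1 < p.2 ∧ z p.2 < z p.1 ∧ z p.1 ≠ p.2}

@[simp] lemma mk_mem_fpfInvSet {z : Equiv.Perm ℤ} {a b : ℤ} :
    (a, b) ∈ fpfInvSet z ↔ a < b ∧ z b < z a ∧ z a ≠ b :=
  Iff.rfl

lemma mk_add_one_mem_fpfInvSet_iff {z : Equiv.Perm ℤ} (hz : Function.Involutive z) (i : ℤ) :
    (i, i + 1) ∈ fpfInvSet z ↔ z i ≠ i + 1 ∧ z (i + 1) < z i ∧ z (i + 1) ≠ i := by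
  have := hz.eq_iff (x := i + 1) (y := i)
  simp only [mk_mem_fpfInvSet, ne_eq, this]
  omega

lemma fpfInvSet_onefpf : fpfInvSet onefpf = ∅ := by
  refine Set.eq_empty_of_forall_notMem fun ⟨a, b⟩ ⟨hab, h, hne⟩ => hne ?_
  simp only [onefpf_apply] at h hne ⊢
  split_ifs at h hne ⊢ <;> omega

lemma fpfInvSet_conj_subset (y : Equiv.Perm ℤ) (i : ℤ) :
    fpfInvSet (sT i * y * sT i) ⊆ insert (i, i + 1)
      (insert (sT i (y⁻¹ i), sT i (y⁻¹ (i + 1))) (sTPair i '' fpfInvSet y)) := by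
  rintro ⟨a, b⟩ ⟨hab, hlt, hne⟩
  simp only [Equiv.Perm.mul_apply] at hlt hne
  simp only [Set.mem_insert_iff, Set.mem_image_equiv, sTPair_symm, sTPair_apply]
  by_cases hi : (a, b) = (i, i + 1)
  · exact Or.inl hi
  have hab' := sT_lt_sT hab hi
  by_cases hy : y (sT i b) < y (sT i a)
  · exact Or.inr (Or.inr ⟨hab', hy, fun h => hne (by rw [h, sT_apply_sT_apply])⟩)
  have hy' : y (sT i a) < y (sT i b) :=
    lt_of_le_of_ne (not_lt.mp hy) (y.injective.ne hab'.ne)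
  have hpair : (y (sT i a), y (sT i b)) = (i, i + 1) := by
    by_contra h
    exact (sT_lt_sT hy' h).not_gt hlt
  simp only [Prod.mk.injEq] at hpair ⊢
  refine Or.inr (Or.inl ⟨?_, ?_⟩)
  · rw [(Equiv.Perm.inv_eq_iff_eq.mpr hpair.1.symm), sT_apply_sT_apply]
  · rw [(Equiv.Perm.inv_eq_iff_eq.mpr hpair.2.symm), sT_apply_sT_apply]

lemma fpfInvSet_conj_subset_of_mem {z : Equiv.Perm ℤ} (hz : Function.Involutive z)
    (hfix : ∀ x, z x ≠ x) {i : ℤ} (hi : (i, i + 1) ∈ fpfInvSet z) :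
    fpfInvSet (sT i * z * sT i) ⊆
      sTPair i '' (fpfInvSet z \ {(i, i + 1), (z (i + 1), z i)}) := by
  obtain ⟨-, hdesc, hne⟩ := mk_mem_fpfInvSet.mp hi
  have hzi : sT i (z i) = z i := sT_apply_of_ne_of_ne (hfix i) hne
  have hzi' : sT i (z (i + 1)) = z (i + 1) :=
    sT_apply_of_ne_of_ne (fun h => hne (by simpa [h] using hz (i + 1))) (hfix (i + 1))
  rintro ⟨a, b⟩ ⟨hab, hlt, hne'⟩
  simp only [Equiv.Perm.mul_apply] at hab hlt hne'
  simp only [Set.mem_image_equiv, sTPair_symm, sTPair_apply, Set.mem_sdiff, Set.mem_insert_iff,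
    Set.mem_singleton_iff, Prod.mk.injEq, not_or, mk_mem_fpfInvSet]
  have hab' : (a, b) ≠ (i, i + 1) := by
    rintro ⟨rfl, rfl⟩
    simp only [sT_apply_left, sT_apply_right, hzi, hzi'] at hlt
    omega
  refine ⟨⟨sT_lt_sT hab hab', ?_, fun h => hne' (by rw [h, sT_apply_sT_apply])⟩, ?_, ?_⟩
  · by_cases h : (sT i (z (sT i b)), sT i (z (sT i a))) = (i, i + 1)
    · simp only [Prod.mk.injEq] at h
      have ha := hz.eq_iff.mp (by simpa using congrArg (sT i) h.2)
      have hb := hz.eq_iff.mp (by simpa using congrArg (sT i) h.1)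
      rw [← sT_apply_sT_apply i a, ← sT_apply_sT_apply i b, ha, hb, hzi, hzi'] at hab
      omega
    · simpa using sT_lt_sT hlt h
  · rintro ⟨ha, hb⟩
    rw [← sT_apply_sT_apply i a, ← sT_apply_sT_apply i b, ha, hb] at hab
    simp at hab
  · rintro ⟨ha, hb⟩
    rw [ha, hb, hz, hz] at hlt
    simp at hlt

lemma sT_mul_conj_mul_sT (y : Equiv.Perm ℤ) (i : ℤ) : sT i * (sT i * y * sT i) * sT i = y := by
  simp [← mul_assoc, sT, Equiv.swap_mul_self]

lemma conj_involutive {z : Equiv.Perm ℤ} (hz : Function.Involutive z) (i : ℤ) :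
    Function.Involutive (sT i * z * sT i) := fun x => by simp [hz _]

lemma conj_apply_ne {z : Equiv.Perm ℤ} (hfix : ∀ x, z x ≠ x) (i x : ℤ) :
    (sT i * z * sT i) x ≠ x := fun h => hfix (sT i x) (by simpa using congrArg (sT i) h)

lemma fpfInvSet_conj_finite_and_ncard_le {y : Equiv.Perm ℤ} (hfin : (fpfInvSet y).Finite)
    (i : ℤ) : (fpfInvSet (sT i * y * sT i)).Finite ∧
      (fpfInvSet (sT i * y * sT i)).ncard ≤ (fpfInvSet y).ncard + 2 := by
  have hsub := fpfInvSet_conj_subset y i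
  have himg := hfin.image (sTPair i)
  refine ⟨((himg.insert _).insert _).subset hsub, (Set.ncard_le_ncard hsub
    ((himg.insert _).insert _)).trans ?_⟩
  grw [Set.ncard_insert_le, Set.ncard_insert_le, Set.ncard_image_of_injective _ (sTPair i).injective]

lemma ncard_fpfInvSet_conj_add_two {z : Equiv.Perm ℤ} (hz : Function.Involutive z)
    (hfix : ∀ x, z x ≠ x) (hfin : (fpfInvSet z).Finite) {i : ℤ} (hi : (i, i + 1) ∈ fpfInvSet z) :
    (fpfInvSet (sT i * z * sT i)).ncard + 2 = (fpfInvSet z).ncard := by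
  obtain ⟨-, hdesc, hne⟩ := mk_mem_fpfInvSet.mp hi
  have hpair : {(i, i + 1), (z (i + 1), z i)} ⊆ fpfInvSet z := by
    refine Set.insert_subset hi (Set.singleton_subset_iff.mpr ⟨hdesc, ?_, ?_⟩) <;>
      simp only [hz _] <;> omega
  have hcard : ({(i, i + 1), (z (i + 1), z i)} : Set (ℤ × ℤ)).ncard = 2 :=
    Set.ncard_pair fun h => hne (Prod.mk.inj h).2.symm
  have hle := Set.ncard_le_ncard (fpfInvSet_conj_subset_of_mem hz hfix hi) (hfin.sdiff.image _)
  rw [Set.ncard_image_of_injective _ (sTPair i).injective,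
    Set.ncard_sdiff hpair, hcard] at hle
  have hge := (fpfInvSet_conj_finite_and_ncard_le
    (fpfInvSet_conj_finite_and_ncard_le hfin i).1 i).2
  rw [sT_mul_conj_mul_sT] at hge
  have := Set.ncard_le_ncard hpair hfin
  omega

lemma conj_eq_self_of_apply_eq_add_one {z : Equiv.Perm ℤ} (hz : Function.Involutive z) {i : ℤ}
    (h : z i = i + 1) : sT i * z * sT i = z := by
  have h' : z (i + 1) = i := (hz.eq_iff.mpr h.symm)
  ext x
  by_cases h₁ : x = i
  · simp [h₁, h, h']
  by_cases h₂ : x = i + 1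
  · simp [h₂, h, h']
  have h₃ : z x ≠ i := fun e => h₂ (by rw [← hz x, e, h])
  have h₄ : z x ≠ i + 1 := fun e => h₁ (by rw [← hz x, e, h'])
  simp [sT_apply_of_ne_of_ne h₁ h₂, sT_apply_of_ne_of_ne h₃ h₄]

lemma ncard_fpfInvSet_le_conj {z : Equiv.Perm ℤ} (hz : Function.Involutive z)
    (hfix : ∀ x, z x ≠ x) (hfin : (fpfInvSet z).Finite) {i : ℤ} (hi : (i, i + 1) ∉ fpfInvSet z) :
    (fpfInvSet z).ncard ≤ (fpfInvSet (sT i * z * sT i)).ncard := by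
  by_cases hpair : z i = i + 1
  · rw [conj_eq_self_of_apply_eq_add_one hz hpair]
  have hzi : z (i + 1) ≠ i := fun h => hpair (hz.eq_iff.mp h).symm
  have hlt : z i < z (i + 1) := by
    simp only [mk_mem_fpfInvSet, not_and] at hi
    exact lt_of_le_of_ne (not_lt.mp fun h => hi (by omega) h hpair) (z.injective.ne (by omega))
  have hi' : (i, i + 1) ∈ fpfInvSet (sT i * z * sT i) := by
    simp [sT_apply_of_ne_of_ne (hfix i) hpair, sT_apply_of_ne_of_ne hzi (hfix (i + 1)), hlt,
      hfix (i + 1)]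
  have := ncard_fpfInvSet_conj_add_two (conj_involutive hz i) (conj_apply_ne hfix i)
    (fpfInvSet_conj_finite_and_ncard_le hfin i).1 hi'
  rw [sT_mul_conj_mul_sT] at this
  omega

lemma exists_mk_mem_fpfInvSet {z : Equiv.Perm ℤ} (hz : Function.Involutive z) {a b : ℤ}
    (h : (a, b) ∈ fpfInvSet z) : ∃ i, (i, i + 1) ∈ fpfInvSet z := by
  induction hn : (b - a).toNat using Nat.strong_induction_on generalizing a b with
  | _ n ih =>
    -- unless `b = a + 1`, one of `(a, a + 1)`, `(a + 1, b)`, `(a + 1, z a)` is an fpf-inversion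
    obtain ⟨hab, hlt, hne⟩ := mk_mem_fpfInvSet.mp h
    by_cases hb : b = a + 1
    · exact ⟨a, hb ▸ h⟩
    rcases lt_or_gt_of_ne (z.injective.ne (show a + 1 ≠ a by omega)) with h₁ | h₁
    · by_cases h₂ : z a = a + 1
      · have h₃ : z (a + 1) = a := hz.eq_iff.mpr h₂.symm
        have h₄ : z b ≠ a := fun e => hb (by rw [← hz b, e, h₂])
        exact ih _ (by omega) (a := a + 1) (b := b) (by simp only [mk_mem_fpfInvSet]; omega) rfl
      · exact ⟨a, by simp only [mk_mem_fpfInvSet]; omega⟩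
    · by_cases h₂ : z (a + 1) = b
      · have h₃ : z b = a + 1 := hz.eq_iff.mpr h₂.symm
        have h₄ : z (z a) = a := hz a
        exact ih _ (by omega) (a := a + 1) (b := z a) (by simp only [mk_mem_fpfInvSet]; omega) rfl
      · exact ih _ (by omega) (a := a + 1) (b := b) (by simp only [mk_mem_fpfInvSet]; omega) rfl

/-! ### The orbit `I^fpf_∞` -/

namespace IfpfInfty

variable {z : Equiv.Perm ℤ}

lemma involutive (hz : z ∈ IfpfInfty) : Function.Involutive z := by
  obtain ⟨w, -, rfl⟩ := hz
  intro x
  simp [onefpf_involutive _]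

lemma apply_ne (hz : z ∈ IfpfInfty) (x : ℤ) : z x ≠ x := by
  obtain ⟨w, -, rfl⟩ := hz
  intro h
  rw [Equiv.Perm.mul_apply, Equiv.Perm.mul_apply, Equiv.Perm.inv_eq_iff_eq, onefpf_apply] at h
  split_ifs at h <;> omega

lemma conj_mem (hz : z ∈ IfpfInfty) {i : ℤ} (hi : 1 ≤ i) : sT i * z * sT i ∈ IfpfInfty := by
  obtain ⟨w, hw, rfl⟩ := hz
  exact ⟨w * sT i, mul_sT_mem_SinftySet hw hi, by simp [mul_assoc]⟩

lemma apply_of_nonpos (hz : z ∈ IfpfInfty) {x : ℤ} (hx : x ≤ 0) : z x = onefpf x := by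
  obtain ⟨w, hw, rfl⟩ := hz
  have h : onefpf x ≤ 0 := by rw [onefpf_apply]; split_ifs <;> omega
  rw [Equiv.Perm.mul_apply, Equiv.Perm.mul_apply, SinftySet.apply_of_nonpos hw hx,
    Equiv.Perm.inv_eq_iff_eq, SinftySet.apply_of_nonpos hw h]

lemma one_le_apply (hz : z ∈ IfpfInfty) {x : ℤ} (hx : 1 ≤ x) : 1 ≤ z x := by
  by_contra h
  have := apply_of_nonpos hz (x := z x) (by omega)
  rw [involutive hz, onefpf_apply] at this
  split_ifs at this <;> omega

lemma one_le_of_mem_fpfInvSet (hz : z ∈ IfpfInfty) {a b : ℤ} (h : (a, b) ∈ fpfInvSet z) :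
    1 ≤ a := by
  obtain ⟨hab, hlt, hne⟩ := mk_mem_fpfInvSet.mp h
  by_contra ha
  have hza := apply_of_nonpos hz (x := a) (by omega)
  by_cases hb : 1 ≤ b
  · have := one_le_apply hz hb
    rw [hza, onefpf_apply] at hlt
    split_ifs at hlt <;> omega
  · rw [hza, apply_of_nonpos hz (x := b) (by omega), onefpf_apply, onefpf_apply] at hlt
    rw [hza, onefpf_apply] at hne
    split_ifs at hlt hne <;> omega

lemma eq_onefpf_of_fpfInvSet_eq_empty (hz : z ∈ IfpfInfty) (h : fpfInvSet z = ∅) :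
    z = onefpf := by
  have hinv := involutive hz
  have hE : ∀ a b, a < b → z b < z a → z a = b := fun a b hab hlt => by
    by_contra hne
    exact (Set.eq_empty_iff_forall_notMem.mp h) (a, b) ⟨hab, hlt, hne⟩
  have hadj : ∀ a, a < z a → z a = a + 1 := fun a ha => by
    by_contra hne
    rcases lt_or_gt_of_ne (apply_ne hz (a + 1)) with hc | hc
    · exact hne (hE a (a + 1) (by omega) (by omega))
    · have := hE (a + 1) (z a) (by omega) (by rw [hinv]; omega)
      exact absurd (z.injective this) (by omega)
  have hstep : ∀ x, z (x - 1) ≠ x → z x = x + 1 := fun x hx => by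
    refine hadj x ((lt_or_gt_of_ne (apply_ne hz x)).resolve_left fun hlt => hx ?_)
    have := hadj (z x) (by rwa [hinv])
    rw [hinv] at this
    rw [show x - 1 = z x by omega, hinv]
  have hodd : ∀ k : ℕ, z (2 * k + 1) = 2 * k + 2 := by
    intro k
    induction k with
    | zero =>
      refine hstep 1 ?_
      rw [sub_self, apply_of_nonpos hz le_rfl, onefpf_apply]
      decide
    | succ k ih =>
      refine (hstep _ ?_).trans (by push_cast; ring)
      rw [show 2 * ((k + 1 : ℕ) : ℤ) + 1 - 1 = z (2 * k + 1) by push_cast; omega, hinv]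
      omega
  ext x
  rcases le_or_gt x 0 with hx | hx
  · exact apply_of_nonpos hz hx
  obtain ⟨k, rfl | rfl⟩ : ∃ k : ℕ, x = 2 * k + 1 ∨ x = 2 * k + 2 := ⟨((x - 1) / 2).toNat, by omega⟩
  · rw [hodd, onefpf_apply, if_neg (by omega)]
    ring
  · rw [show (2 * k + 2 : ℤ) = z (2 * k + 1) from (hodd k).symm, hinv, hodd, onefpf_apply,
      if_pos (by omega)]
    ring

end IfpfInfty

/-! ### Atoms -/

lemma conj_mul_sT (v : Equiv.Perm ℤ) (i : ℤ) :
    (v * sT i)⁻¹ * onefpf * (v * sT i) = sT i * (v⁻¹ * onefpf * v) * sT i := by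
  simp [mul_assoc]

lemma fpfInvSet_conj_wordProd_finite_and_ncard_le (l : List ℤ) :
    (fpfInvSet ((wordProd l)⁻¹ * onefpf * wordProd l)).Finite ∧
      (fpfInvSet ((wordProd l)⁻¹ * onefpf * wordProd l)).ncard ≤ 2 * l.length := by
  induction l using List.reverseRecOn with
  | nil => simp [wordProd, fpfInvSet_onefpf]
  | append_singleton l i ih =>
    rw [wordProd_concat, conj_mul_sT, List.length_append, List.length_singleton]
    have := fpfInvSet_conj_finite_and_ncard_le ih.1 i
    exact ⟨this.1, by omega⟩

lemma fpfInvSet_finite_and_ncard_le_two_mul_lenOf {z v : Equiv.Perm ℤ} (hv : v ∈ SZSet)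
    (h : z = v⁻¹ * onefpf * v) : (fpfInvSet z).Finite ∧ (fpfInvSet z).ncard ≤ 2 * lenOf v := by
  obtain ⟨l, rfl, hlen⟩ := exists_wordProd_eq_of_length_eq_lenOf hv
  subst h
  exact hlen ▸ fpfInvSet_conj_wordProd_finite_and_ncard_le l

lemma IfpfInfty.fpfInvSet_finite {z : Equiv.Perm ℤ} (hz : z ∈ IfpfInfty) :
    (fpfInvSet z).Finite := by
  obtain ⟨v, hv, h⟩ := hz
  exact (fpfInvSet_finite_and_ncard_le_two_mul_lenOf (SinftySet_subset_SZSet hv) h).1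

lemma IfpfInfty.ncard_fpfInvSet_conj_add_two {z : Equiv.Perm ℤ} (hz : z ∈ IfpfInfty) {i : ℤ}
    (hi : (i, i + 1) ∈ fpfInvSet z) :
    (fpfInvSet (sT i * z * sT i)).ncard + 2 = (fpfInvSet z).ncard :=
  _root_.ncard_fpfInvSet_conj_add_two (IfpfInfty.involutive hz) (IfpfInfty.apply_ne hz)
    (IfpfInfty.fpfInvSet_finite hz) hi

lemma exists_mem_SinftySet_two_mul_lenOf_le {z : Equiv.Perm ℤ} (hz : z ∈ IfpfInfty) :
    ∃ v ∈ SinftySet, z = v⁻¹ * onefpf * v ∧ 2 * lenOf v ≤ (fpfInvSet z).ncard := by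
  induction hn : (fpfInvSet z).ncard using Nat.strong_induction_on generalizing z with
  | _ n ih =>
    rcases (fpfInvSet z).eq_empty_or_nonempty with hE | ⟨⟨a, b⟩, hab⟩
    · refine ⟨1, ⟨[], by simp, rfl⟩, ?_, by simp [lenOf_one]⟩
      simp [IfpfInfty.eq_onefpf_of_fpfInvSet_eq_empty hz hE]
    obtain ⟨i, hi⟩ := exists_mk_mem_fpfInvSet (IfpfInfty.involutive hz) hab
    have hi₁ := IfpfInfty.one_le_of_mem_fpfInvSet hz hi
    have hcard := IfpfInfty.ncard_fpfInvSet_conj_add_two hz hi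
    obtain ⟨v, hv, hconj, hlen⟩ := ih _ (by omega) (IfpfInfty.conj_mem hz hi₁) rfl
    refine ⟨v * sT i, mul_sT_mem_SinftySet hv hi₁, ?_, ?_⟩
    · rw [conj_mul_sT, ← hconj, sT_mul_conj_mul_sT]
    · have := lenOf_mul_sT_le (SinftySet_subset_SZSet hv) i
      omega

section Atoms

variable {z w : Equiv.Perm ℤ}

lemma lenOf_eq_of_mem_ASp {w' : Equiv.Perm ℤ} (hw : w ∈ ASp z) (hw' : w' ∈ ASp z) :
    lenOf w = lenOf w' :=
  le_antisymm (hw.2.2 _ hw'.1 hw'.2.1) (hw'.2.2 _ hw.1 hw.2.1)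

lemma mem_ASp_of_two_mul_lenOf_le (hw : w ∈ SZSet) (hconj : z = w⁻¹ * onefpf * w)
    (hlen : 2 * lenOf w ≤ (fpfInvSet z).ncard) : w ∈ ASp z :=
  ⟨hw, hconj, fun _ hv hv' => by
    have := (fpfInvSet_finite_and_ncard_le_two_mul_lenOf hv hv').2
    omega⟩

lemma two_mul_lenOf_of_mem_ASp (hz : z ∈ IfpfInfty) (hw : w ∈ ASp z) :
    2 * lenOf w = (fpfInvSet z).ncard := by
  obtain ⟨v, hv, hconj, hlen⟩ := exists_mem_SinftySet_two_mul_lenOf_le hz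
  have := hw.2.2 v (SinftySet_subset_SZSet hv) hconj
  have := (fpfInvSet_finite_and_ncard_le_two_mul_lenOf hw.1 hw.2.1).2
  omega

lemma lt_apply_add_one_of_mem_ASp (hz : z ∈ IfpfInfty) (hw : w ∈ ASp z) {i : ℤ}
    (hi : (i, i + 1) ∉ fpfInvSet z) : w i < w (i + 1) := by
  by_contra hasc
  have hdesc : w (i + 1) < w i := lt_of_le_of_ne (not_lt.mp hasc) (w.injective.ne (by omega))
  have hconj : sT i * z * sT i = (w * sT i)⁻¹ * onefpf * (w * sT i) := by
    rw [conj_mul_sT, ← hw.2.1]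
  have h₁ := lenOf_mul_sT_of_descent hw.1 hdesc
  have h₂ := (fpfInvSet_finite_and_ncard_le_two_mul_lenOf (mul_sT_mem_SZSet hw.1 i) hconj).2
  have h₃ := ncard_fpfInvSet_le_conj (IfpfInfty.involutive hz) (IfpfInfty.apply_ne hz)
    (IfpfInfty.fpfInvSet_finite hz) hi
  have h₄ := two_mul_lenOf_of_mem_ASp hz hw
  omega

lemma mk_mem_fpfInvSet_of_mem_ASp (hz : z ∈ IfpfInfty) (hw : w ∈ ASp z) {i : ℤ}
    (hdesc : w (i + 1) < w i) : (i, i + 1) ∈ fpfInvSet z := by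
  by_contra hi
  exact (lt_apply_add_one_of_mem_ASp hz hw hi).not_gt hdesc

lemma exists_mem_ASp_apply_add_one_lt (hz : z ∈ IfpfInfty) {i : ℤ}
    (hi : (i, i + 1) ∈ fpfInvSet z) : ∃ w ∈ ASp z, w (i + 1) < w i := by
  have hi₁ := IfpfInfty.one_le_of_mem_fpfInvSet hz hi
  have hcard := IfpfInfty.ncard_fpfInvSet_conj_add_two hz hi
  obtain ⟨u, hu, hconj, hlen⟩ := exists_mem_SinftySet_two_mul_lenOf_le (IfpfInfty.conj_mem hz hi₁)
  have huZ := SinftySet_subset_SZSet hu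
  have hw : u * sT i ∈ ASp z := by
    refine mem_ASp_of_two_mul_lenOf_le (mul_sT_mem_SZSet huZ i) ?_ ?_
    · rw [conj_mul_sT, ← hconj, sT_mul_conj_mul_sT]
    · have := lenOf_mul_sT_le huZ i
      omega
  refine ⟨u * sT i, hw, ?_⟩
  simp only [Equiv.Perm.mul_apply, sT_apply_left, sT_apply_right]
  by_contra hasc
  have hdesc : u (i + 1) < u i := lt_of_le_of_ne (not_lt.mp hasc) (u.injective.ne (by omega))
  have := lenOf_mul_sT_of_descent huZ hdesc
  have := two_mul_lenOf_of_mem_ASp hz hw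
  omega

lemma ASp_subset_SinftySet (hz : z ∈ IfpfInfty) : ASp z ⊆ SinftySet := by
  intro w hw
  induction hn : lenOf w using Nat.strong_induction_on generalizing z w with
  | _ n ih =>
    by_cases hne : w = 1
    · exact hne ▸ ⟨[], by simp, rfl⟩
    obtain ⟨i, hdesc⟩ := exists_descent hw.1 hne
    have hi := mk_mem_fpfInvSet_of_mem_ASp hz hw hdesc
    have hi₁ := IfpfInfty.one_le_of_mem_fpfInvSet hz hi
    have hlen := lenOf_mul_sT_of_descent hw.1 hdesc
    have hw' : w * sT i ∈ ASp (sT i * z * sT i) := by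
      refine mem_ASp_of_two_mul_lenOf_le (mul_sT_mem_SZSet hw.1 i) ?_ ?_
      · rw [conj_mul_sT, ← hw.2.1]
      · have := IfpfInfty.ncard_fpfInvSet_conj_add_two hz hi
        have := two_mul_lenOf_of_mem_ASp hz hw
        omega
    simpa using mul_sT_mem_SinftySet (ih _ (by omega) (IfpfInfty.conj_mem hz hi₁) hw' rfl) hi₁

end Atoms

/-! ### Schubert polynomials -/

lemma X_sub_X_add_one_ne_zero (i : ℤ) : (X i - X (i + 1) : MvPolynomial ℤ ℤ) ≠ 0 :=
  sub_ne_zero.mpr ((X_injective (R := ℤ)).ne (by omega))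

lemma rename_sT_rename_sT (i : ℤ) (f : MvPolynomial ℤ ℤ) :
    rename (sT i) (rename (sT i) f) = f := by
  rw [rename_rename]
  convert rename_id_apply f
  ext x
  simp

section Schubert

variable {Sf : Equiv.Perm ℤ → MvPolynomial ℤ ℤ}

lemma IsSchubertFamily.one (hSf : IsSchubertFamily Sf) : Sf 1 = 1 := by
  have hD : RotheD 1 = YDiag fun _ => 0 := by
    ext ⟨a, b⟩
    simp only [RotheD, YDiag, Set.mem_ofPred_eq, Equiv.Perm.coe_one, id_eq]
    omega
  rw [hSf.1 1 ⟨[], by simp, rfl⟩ (fun _ => 0) ⟨⟨fun _ _ => rfl, 0, fun _ _ => rfl⟩,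
    fun _ _ => le_rfl⟩ hD 0 fun _ _ => rfl, xpow, Finset.prod_range_zero]

lemma IsSchubertFamily.rename_of_lt (hSf : IsSchubertFamily Sf) {w : Equiv.Perm ℤ}
    (hw : w ∈ SinftySet) {i : ℤ} (hi : 1 ≤ i) (h : w i < w (i + 1)) :
    rename (sT i) (Sf w) = Sf w := by
  have h₁ := hSf.2 (w * sT i) (mul_sT_mem_SinftySet hw hi) i hi (by simpa using h)
  have h₂ := congrArg (rename (sT i)) h₁
  simp only [mul_sT_mul_sT, map_sub, map_mul, rename_X, sT_apply_left, sT_apply_right,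
    rename_sT_rename_sT] at h₁ h₂
  have h₃ : (X i - X (i + 1) : MvPolynomial ℤ ℤ) * (Sf w - rename (sT i) (Sf w)) = 0 := by
    linear_combination h₁ + h₂
  exact (sub_eq_zero.mp ((mul_eq_zero.mp h₃).resolve_left (X_sub_X_add_one_ne_zero i))).symm

open Classical in
noncomputable def descentShift (G : Finset (Equiv.Perm ℤ)) (i : ℤ) : Finset (Equiv.Perm ℤ) :=
  (G.filter fun w => w (i + 1) < w i).image (· * sT i)

lemma mul_sT_mem_descentShift {G : Finset (Equiv.Perm ℤ)} {w : Equiv.Perm ℤ} (hw : w ∈ G)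
    {i : ℤ} (h : w (i + 1) < w i) : w * sT i ∈ descentShift G i := by
  classical
  exact Finset.mem_image_of_mem _ (Finset.mem_filter.mpr ⟨hw, h⟩)

lemma mem_SinftySet_of_mem_descentShift {G : Finset (Equiv.Perm ℤ)}
    (hG : ∀ w ∈ G, w ∈ SinftySet) {i : ℤ} (hi : 1 ≤ i) {v : Equiv.Perm ℤ}
    (hv : v ∈ descentShift G i) : v ∈ SinftySet := by
  classical
  obtain ⟨w, hw, rfl⟩ := Finset.mem_image.mp hv
  exact mul_sT_mem_SinftySet (hG w (Finset.mem_filter.mp hw).1) hi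

lemma lenOf_of_mem_descentShift {G : Finset (Equiv.Perm ℤ)} (hG : ∀ w ∈ G, w ∈ SinftySet)
    {k : ℕ} (hlen : ∀ w ∈ G, lenOf w = k + 1) {i : ℤ} {v : Equiv.Perm ℤ}
    (hv : v ∈ descentShift G i) : lenOf v = k := by
  classical
  obtain ⟨w, hw, rfl⟩ := Finset.mem_image.mp hv
  obtain ⟨hw, hdesc⟩ := Finset.mem_filter.mp hw
  have := lenOf_mul_sT_of_descent (SinftySet_subset_SZSet (hG w hw)) hdesc
  have := hlen w hw
  omega

lemma IsSchubertFamily.sum_sub_rename_sum (hSf : IsSchubertFamily Sf)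
    {G : Finset (Equiv.Perm ℤ)} (hG : ∀ w ∈ G, w ∈ SinftySet) {i : ℤ} (hi : 1 ≤ i) :
    ∑ w ∈ G, Sf w - rename (sT i) (∑ w ∈ G, Sf w) =
      (X i - X (i + 1)) * ∑ v ∈ descentShift G i, Sf v := by
  classical
  calc ∑ w ∈ G, Sf w - rename (sT i) (∑ w ∈ G, Sf w)
      = ∑ w ∈ G, (Sf w - rename (sT i) (Sf w)) := by rw [map_sum, Finset.sum_sub_distrib]
    _ = ∑ w ∈ G.filter fun w => w (i + 1) < w i, (Sf w - rename (sT i) (Sf w)) := by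
      refine (Finset.sum_filter_of_ne fun w hw hne => ?_).symm
      by_contra h
      exact hne (by rw [hSf.rename_of_lt (hG w hw) hi
        (lt_of_le_of_ne (not_lt.mp h) (w.injective.ne (by omega))), sub_self])
    _ = ∑ w ∈ G.filter fun w => w (i + 1) < w i, (X i - X (i + 1)) * Sf (w * sT i) :=
      Finset.sum_congr rfl fun w hw => by
        obtain ⟨hw, hdesc⟩ := Finset.mem_filter.mp hw
        exact (hSf.2 w (hG w hw) i hi hdesc).symm
    _ = (X i - X (i + 1)) * ∑ v ∈ descentShift G i, Sf v := by
      rw [descentShift, Finset.sum_image fun _ _ _ _ h => mul_right_cancel h, Finset.mul_sum]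

lemma IsSchubertFamily.sum_ne_zero (hSf : IsSchubertFamily Sf) {k : ℕ}
    {G : Finset (Equiv.Perm ℤ)} (hne : G.Nonempty) (hG : ∀ w ∈ G, w ∈ SinftySet)
    (hlen : ∀ w ∈ G, lenOf w = k) : ∑ w ∈ G, Sf w ≠ 0 := by
  induction k generalizing G with
  | zero =>
    have : G = {1} := Finset.eq_singleton_iff_nonempty_unique_mem.mpr ⟨hne, fun w hw =>
      eq_one_of_lenOf_eq_zero (SinftySet_subset_SZSet (hG w hw)) (hlen w hw)⟩
    simp [this, hSf.one]
  | succ k ih =>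
    obtain ⟨w, hw⟩ := hne
    have hw₁ : w ≠ 1 := fun h => by simpa [h, lenOf_one] using hlen w hw
    obtain ⟨i, hi, hdesc⟩ := SinftySet.exists_pos_descent (hG w hw) hw₁
    intro h
    have := hSf.sum_sub_rename_sum hG hi
    rw [h, map_zero, sub_zero, zero_eq_mul] at this
    exact this.elim (X_sub_X_add_one_ne_zero i) (ih ⟨_, mul_sT_mem_descentShift hw hdesc⟩
      (fun _ => mem_SinftySet_of_mem_descentShift hG hi)
      (fun _ => lenOf_of_mem_descentShift hG hlen))

lemma IsSchubertFamily.rename_sum_ne (hSf : IsSchubertFamily Sf) {G : Finset (Equiv.Perm ℤ)}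
    (hG : ∀ w ∈ G, w ∈ SinftySet) {w : Equiv.Perm ℤ} (hw : w ∈ G)
    (hlen : ∀ v ∈ G, lenOf v = lenOf w) {i : ℤ} (hi : 1 ≤ i) (hdesc : w (i + 1) < w i) :
    rename (sT i) (∑ v ∈ G, Sf v) ≠ ∑ v ∈ G, Sf v := by
  have hk := lenOf_mul_sT_of_descent (SinftySet_subset_SZSet (hG w hw)) hdesc
  intro h
  have := hSf.sum_sub_rename_sum hG hi
  rw [h, sub_self, zero_eq_mul] at this
  exact this.elim (X_sub_X_add_one_ne_zero i)
    (hSf.sum_ne_zero ⟨_, mul_sT_mem_descentShift hw hdesc⟩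
      (fun _ => mem_SinftySet_of_mem_descentShift hG hi)
      (fun _ => lenOf_of_mem_descentShift hG fun v hv => (hlen v hv).trans hk.symm))

end Schubert

/-! ### Variables of `s_i`-invariant polynomials -/

lemma rename_eq_self_of_forall_mem_vars {f : MvPolynomial ℤ ℤ} {σ : ℤ → ℤ}
    (h : ∀ j ∈ f.vars, σ j = j) : rename σ f = f :=
  hom_congr_vars (f₁ := (rename σ).toRingHom) (f₂ := RingHom.id _) (by ext; simp)
    (fun j hj _ => by simp [h j hj]) rfl

lemma rename_sT_eq_self_of_forall_not_mem_vars {f : MvPolynomial ℤ ℤ} {n : ℕ}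
    (h : ∀ m : ℤ, (n : ℤ) < m → m ∉ f.vars) {i : ℤ} (hi : (n : ℤ) < i) :
    rename (sT i) f = f :=
  rename_eq_self_of_forall_mem_vars fun j hj => sT_apply_of_ne_of_ne
    (fun e => h i hi (e ▸ hj)) (fun e => h (i + 1) (by omega) (e ▸ hj))

lemma forall_not_mem_vars_of_rename_sT_eq_self {f : MvPolynomial ℤ ℤ} {n : ℕ}
    (h : ∀ i : ℤ, (n : ℤ) < i → rename (sT i) f = f) : ∀ m : ℤ, (n : ℤ) < m → m ∉ f.vars := by
  intro m hm hmem
  set M := f.vars.max' ⟨m, hmem⟩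
  have hM : M ∈ (rename (sT M) f).vars := by
    rw [h M (hm.trans_le (f.vars.le_max' m hmem))]
    exact f.vars.max'_mem _
  obtain ⟨j, hj, hjM⟩ := mem_vars_rename _ _ hM
  have : j = M + 1 := by simpa using congrArg (sT M) hjM
  have := f.vars.le_max' j hj
  omega

theorem SSp_in_n_variables_iff_general (n : ℕ)
    (Sf : Equiv.Perm ℤ → MvPolynomial ℤ ℤ) (hSf : IsSchubertFamily Sf)
    (z : Equiv.Perm ℤ) (hz : z ∈ IfpfInfty)
    (F : Finset (Equiv.Perm ℤ)) (hF : ↑F = ASp z) :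
    (∀ m : ℤ, (n : ℤ) < m → m ∉ (∑ w ∈ F, Sf w).vars) ↔
      (∀ i : ℤ, (n : ℤ) < i → ¬ (z i ≠ i + 1 ∧ z (i + 1) < z i ∧ z (i + 1) ≠ i)) := by
  have hmem : ∀ {w}, w ∈ F ↔ w ∈ ASp z := by rw [← hF]; rfl
  have hS : ∀ w ∈ F, w ∈ SinftySet := fun w hw => ASp_subset_SinftySet hz (hmem.mp hw)
  have hdesc := mk_add_one_mem_fpfInvSet_iff (IfpfInfty.involutive hz)
  constructor
  · intro hvars i hi hi'
    obtain ⟨w, hw, hwi⟩ := exists_mem_ASp_apply_add_one_lt hz ((hdesc i).mpr hi')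
    exact hSf.rename_sum_ne hS (hmem.mpr hw) (fun v hv => lenOf_eq_of_mem_ASp (hmem.mp hv) hw)
      (by omega) hwi (rename_sT_eq_self_of_forall_not_mem_vars hvars hi)
  · intro hnd
    refine forall_not_mem_vars_of_rename_sT_eq_self fun i hi => ?_
    rw [map_sum]
    exact Finset.sum_congr rfl fun w hw => hSf.rename_of_lt (hS w hw) (by omega)
      (lt_apply_add_one_of_mem_ASp hz (hmem.mp hw) fun h => hnd i hi ((hdesc i).mp h))

/-- For `z ∈ I^fpf_∞`, the symplectic involution Schubert polynomial
`𝔖^Sp_z = ∑_{w ∈ 𝒜^Sp(z)} 𝔖_w` lies in `ℤ[x_1, …, x_n]` if and only if `z` has no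
fpf-descent greater than `n`. -/
theorem SSp_in_n_variables_iff (n : ℕ) (hn : 0 < n)
    (Sf : Equiv.Perm ℤ → MvPolynomial ℤ ℤ) (hSf : IsSchubertFamily Sf)
    (z : Equiv.Perm ℤ) (hz : z ∈ IfpfInfty)
    (F : Finset (Equiv.Perm ℤ)) (hF : ↑F = ASp z) :
    (∀ m : ℤ, (n : ℤ) < m → m ∉ (∑ w ∈ F, Sf w).vars) ↔
      (∀ i : ℤ, (n : ℤ) < i → ¬ (z i ≠ i + 1 ∧ z (i + 1) < z i ∧ z (i + 1) ≠ i)) :=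
  SSp_in_n_variables_iff_general n Sf hSf z hz F hF
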